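/- For every ν with 0 < ν < 1 there exists a real number s > 0 satisfying the step-size equation t̄_ν = s + (ν/2) s^{ν−1}, where t̄_ν := 2^{−1/(2−ν)} (2−ν) (2−2ν)^{−(1−ν)/(2−ν)}. -/

import Mathlib

/- The jump is at `s = (1 - ν)^{1/(2-ν)}`, i.e. `s^{2-ν} = 1 - ν`. There `s = (1 - ν) s^{ν-1}`, so
`s + (ν/2) s^{ν-1} = ((2 - ν)/2) s^{ν-1} = ((2 - ν)/2) (1 - ν)^{-(1-ν)/(2-ν)}`; and since the two powers
of `2` in `t̄_ν` multiply to `1/2`, this is exactly `t̄_ν`. -/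

/-- The rescaled GGD-MAP threshold
`t̄_ν = 2^{−1/(2−ν)} (2−ν) (2−2ν)^{−(1−ν)/(2−ν)}` (real powers). -/
noncomputable def tbar (ν : ℝ) : ℝ :=
  (2 : ℝ) ^ (-(1 / (2 - ν))) * (2 - ν) * (2 - 2 * ν) ^ (-((1 - ν) / (2 - ν)))

open Real

lemma tbar_eq_of_lt_one {ν : ℝ} (hν : ν < 1) :
    tbar ν = (2 - ν) / 2 * (1 - ν) ^ (-((1 - ν) / (2 - ν))) := by
  have h2ν : (2 : ℝ) - ν ≠ 0 := by linarith
  have htwo : (2 : ℝ) ^ (-(1 / (2 - ν))) * 2 ^ (-((1 - ν) / (2 - ν))) = 2⁻¹ := by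
    rw [← rpow_add two_pos, show -(1 / (2 - ν)) + -((1 - ν) / (2 - ν)) = -1 by field_simp; ring,
      rpow_neg_one]
  rw [tbar, show (2 : ℝ) - 2 * ν = 2 * (1 - ν) by ring, mul_rpow zero_le_two (by linarith)]
  linear_combination ((2 - ν) * (1 - ν) ^ (-((1 - ν) / (2 - ν)))) * htwo

lemma add_half_mul_rpow_sub_one {s ν : ℝ} (hs : 0 < s) (hsν : s ^ (2 - ν) = 1 - ν) :
    s + ν / 2 * s ^ (ν - 1) = (2 - ν) / 2 * s ^ (ν - 1) := by
  have hs_eq : s = (1 - ν) * s ^ (ν - 1) := by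
    rw [← hsν, ← rpow_add hs, show 2 - ν + (ν - 1) = 1 by ring, rpow_one]
  linear_combination hs_eq

theorem tbar_step_size_general (ν : ℝ) (h2 : ν < 1) :
    ∃ s : ℝ, 0 < s ∧ tbar ν = s + ν / 2 * s ^ (ν - 1) := by
  have hν : 0 < 1 - ν := by linarith
  have h2ν : (2 : ℝ) - ν ≠ 0 := by linarith
  set s := (1 - ν) ^ (2 - ν)⁻¹ with hs_def
  have hs : 0 < s := rpow_pos_of_pos hν _
  have hs_pow : s ^ (2 - ν) = 1 - ν := rpow_inv_rpow hν.le h2ν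
  have hs_pow' : s ^ (ν - 1) = (1 - ν) ^ (-((1 - ν) / (2 - ν))) := by
    rw [hs_def, ← rpow_mul hν.le]
    congr 1
    field_simp
    ring
  refine ⟨s, hs, ?_⟩
  rw [add_half_mul_rpow_sub_one hs hs_pow, hs_pow', tbar_eq_of_lt_one h2]

/-- For `0 < ν < 1` the step-size equation `t̄_ν = s + (ν/2) s^{ν−1}` has a positive
solution `s` (the size of the jump discontinuity of the GGD-MAP estimator). -/
theorem tbar_step_size (ν : ℝ) (h1 : 0 < ν) (h2 : ν < 1) :
    ∃ s : ℝ, 0 < s ∧ tbar ν = s + ν / 2 * s ^ (ν - 1) :=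
  tbar_step_size_general ν h2
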